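/- The optimal r* is strictly increasing in P_G: if S(r, P_G) = 2ω + 1/(2√(1 + r(1−P_G)/P_G)) − 1/(2√(1−r)) and r*(P_G) denotes the unique root of S(·, P_G) = 0 in (0,1), then P_G ↦ r*(P_G) is strictly increasing on (0,1). -/
import Mathlib

lemma inv_sqrt_lt (a b : ℝ) (hb : 0 < b) (hab : b < a) :
    1 / (2 * Real.sqrt a) < 1 / (2 * Real.sqrt b) := by
  have h1 : Real.sqrt b < Real.sqrt a := Real.sqrt_lt_sqrt hb.le hab
  have h2 : 0 < Real.sqrt b := Real.sqrt_pos.mpr hb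
  gcongr

theorem rstar_strictMono_in_PG
    (ω : ℝ) (hω : 0 < ω)
    (S : ℝ → ℝ → ℝ)
    (hS : ∀ r PG, S r PG = 2 * ω + 1 / (2 * Real.sqrt (1 + r * (1 - PG) / PG))
        - 1 / (2 * Real.sqrt (1 - r)))
    (rstar : ℝ → ℝ)
    (hmem : ∀ PG ∈ Set.Ioo (0:ℝ) 1, rstar PG ∈ Set.Ioo (0:ℝ) 1)
    (hroot : ∀ PG ∈ Set.Ioo (0:ℝ) 1, S (rstar PG) PG = 0)
    (huniq : ∀ PG ∈ Set.Ioo (0:ℝ) 1, ∀ r ∈ Set.Ioo (0:ℝ) 1, S r PG = 0 → r = rstar PG) :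
    StrictMonoOn rstar (Set.Ioo (0:ℝ) 1) := by
  -- S is strictly increasing in PG (for r ∈ (0,1))
  have hPGmono : ∀ r ∈ Set.Ioo (0:ℝ) 1, ∀ P1 ∈ Set.Ioo (0:ℝ) 1, ∀ P2 ∈ Set.Ioo (0:ℝ) 1,
      P1 < P2 → S r P1 < S r P2 := by
    rintro r ⟨hr0, hr1⟩ P1 ⟨h10, h11⟩ P2 ⟨h20, h21⟩ h12
    rw [hS, hS]
    have key : 1 + r * (1 - P2) / P2 < 1 + r * (1 - P1) / P1 := by
      have : (1 - P2) / P2 < (1 - P1) / P1 := by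
        rw [div_lt_div_iff₀ h20 h10]
        nlinarith
      rw [mul_div_assoc, mul_div_assoc]
      have := mul_lt_mul_of_pos_left this hr0
      linarith
    have hpos : 0 < 1 + r * (1 - P2) / P2 := by
      have : 0 < (1 - P2) / P2 := div_pos (by linarith) h20
      have := mul_pos hr0 this
      rw [mul_div_assoc]
      linarith
    have := inv_sqrt_lt _ _ hpos key
    linarith
  -- S is strictly decreasing in r (for PG ∈ (0,1))
  have hrmono : ∀ PG ∈ Set.Ioo (0:ℝ) 1, ∀ r1 ∈ Set.Ioo (0:ℝ) 1, ∀ r2 ∈ Set.Ioo (0:ℝ) 1,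
      r1 < r2 → S r2 PG < S r1 PG := by
    rintro PG ⟨hP0, hP1⟩ r1 ⟨ha0, ha1⟩ r2 ⟨hb0, hb1⟩ hab
    rw [hS, hS]
    have hc : 0 < (1 - PG) / PG := div_pos (by linarith) hP0
    have key1 : 1 + r1 * (1 - PG) / PG < 1 + r2 * (1 - PG) / PG := by
      have := mul_lt_mul_of_pos_right hab hc
      rw [mul_div_assoc, mul_div_assoc] at *
      linarith
    have hpos1 : 0 < 1 + r1 * (1 - PG) / PG := by
      have := mul_pos ha0 hc
      rw [mul_div_assoc]
      linarith
    have h1 := inv_sqrt_lt _ _ hpos1 key1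
    have h2 := inv_sqrt_lt (1 - r1) (1 - r2) (by linarith) (by linarith)
    linarith
  intro P1 hP1 P2 hP2 h12
  by_contra hle
  push_neg at hle
  have hr1 := hmem P1 hP1
  have hr2 := hmem P2 hP2
  have hS1 : S (rstar P1) P2 > 0 := by
    have := hPGmono (rstar P1) hr1 P1 hP1 P2 hP2 h12
    rw [hroot P1 hP1] at this
    linarith
  rcases lt_or_eq_of_le hle with h | h
  · have := hrmono P2 hP2 (rstar P2) hr2 (rstar P1) hr1 h
    rw [hroot P2 hP2] at this
    linarith
  · rw [← h] at hS1
    rw [hroot P2 hP2] at hS1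
    linarith
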